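/- Let F : Δ_A → [0,1]^K be L-Lipschitz. For every pair of players i, j ∈ {1, …, N}, every strategy profile (π¹, …, π^N) ∈ Δ_A^N, and every π, π̄ ∈ Δ_A, it holds that | E^i_exp(π, π^{−j}) − E^i_exp(π̄, π^{−j}) | ≤ L̄_{j,i} ‖π − π̄‖₂, where L̄_{j,i} = √K if j = i and L̄_{j,i} = 4L√(2K)/N if j ≠ i. -/

import Mathlib

/-!
Moving player `j` from `π̄` to `π` changes `V^i` by an average, over the other players' actions,
of `∑ₐ (π - π̄)(a) g(a)`, where `g(a)` is the payoff of `i` when `j` plays `a`. As `π - π̄` sums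
to zero, this is at most the oscillation of `g` times `‖π - π̄‖₁`. For `j = i` payoffs lie in
`[0, 1]`, so the oscillation is at most `1`; for `j ≠ i` the action of `j` moves the empirical
distribution by at most `2 / N`, so it is at most `2L / N`. The best-response value
`sup_{π′} V^i(π′, π^{-i})` does not depend on `π^i`, and for `j ≠ i` it inherits the bound
`2L / N` as a supremum. Finally `‖·‖₁ ≤ √K ‖·‖₂`.
-/

open scoped BigOperators
open MeasureTheory ProbabilityTheory Finset

noncomputable section

/-- The probability simplex over `Fin K`, inside Euclidean space (ℓ2 norm). -/
def simplex (K : ℕ) : Set (EuclideanSpace ℝ (Fin K)) :=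
  {x | (∀ a, 0 ≤ x a) ∧ ∑ a, x a = 1}

/-- Empirical occupancy measure `μ̂ = (1/N) ∑_j e_{a^j}` of an action profile. -/
def empDist (K N : ℕ) (v : Fin N → Fin K) : EuclideanSpace ℝ (Fin K) :=
  (N : ℝ)⁻¹ • ∑ j : Fin N, EuclideanSpace.single (v j) (1 : ℝ)

/-- Expected payoff `V^i(π¹,…,π^N) = E[F(μ̂)(a^i)]`, written as the finite sum over
action profiles weighted by the product of the independent mixed strategies. -/
def Vval (K N : ℕ) (F : EuclideanSpace ℝ (Fin K) → EuclideanSpace ℝ (Fin K))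
    (π : Fin N → EuclideanSpace ℝ (Fin K)) (i : Fin N) : ℝ :=
  ∑ v : Fin N → Fin K, (∏ j : Fin N, π j (v j)) * F (empDist K N v) (v i)

/-- Exploitability `E^i_exp(π¹,…,π^N) = sup_{π′∈Δ} V^i(π′,π^{−i}) − V^i(π¹,…,π^N)`. -/
def expl (K N : ℕ) (F : EuclideanSpace ℝ (Fin K) → EuclideanSpace ℝ (Fin K))
    (π : Fin N → EuclideanSpace ℝ (Fin K)) (i : Fin N) : ℝ :=
  (⨆ p : simplex K, Vval K N F (Function.update π i (p : EuclideanSpace ℝ (Fin K))) i)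
    - Vval K N F π i

section ProductExpectation

variable {ι α : Type*} [DecidableEq ι]

lemma funSplitAt_symm_eq_update (j : ι) (a b : α) (u : {k // k ≠ j} → α) :
    (Equiv.funSplitAt j α).symm (a, u)
      = Function.update ((Equiv.funSplitAt j α).symm (b, u)) j a := by
  ext k
  by_cases hk : k = j
  · subst hk; simp
  · simp [hk]

variable [Fintype ι] [Fintype α]

lemma abs_sum_mul_le_of_sum_eq_zero {c g : α → ℝ} {δ : ℝ} (hc : ∑ a, c a = 0)
    (hg : ∀ a b, |g a - g b| ≤ δ) : |∑ a, c a * g a| ≤ δ * ∑ a, |c a| := by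
  rcases isEmpty_or_nonempty α with hα | ⟨⟨a₀⟩⟩
  · simp
  have hshift : ∑ a, c a * g a = ∑ a, c a * (g a - g a₀) := by
    simp only [mul_sub, sum_sub_distrib, ← sum_mul, hc, zero_mul, sub_zero]
  calc |∑ a, c a * g a| ≤ ∑ a, |c a| * |g a - g a₀| := by
        rw [hshift]; exact (abs_sum_le_sum_abs _ _).trans_eq (by simp only [abs_mul])
    _ ≤ ∑ a, |c a| * δ := by gcongr with a; exact hg a a₀
    _ = δ * ∑ a, |c a| := by rw [← sum_mul, mul_comm]

def expectProd (π : ι → α → ℝ) (G : (ι → α) → ℝ) : ℝ :=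
  ∑ v, (∏ k, π k (v k)) * G v

lemma expectProd_update (π : ι → α → ℝ) (j : ι) (q : α → ℝ) (G : (ι → α) → ℝ) :
    expectProd (Function.update π j q) G
      = ∑ u : {k // k ≠ j} → α,
          (∏ k, π k.1 (u k)) * ∑ a, q a * G ((Equiv.funSplitAt j α).symm (a, u)) := by
  rw [expectProd, ← (Equiv.funSplitAt j α).symm.sum_comp, Fintype.sum_prod_type, sum_comm]
  refine sum_congr rfl fun u _ => ?_
  rw [mul_sum]
  refine sum_congr rfl fun a _ => ?_
  have hrest (k : {k // k ≠ j}) :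
      Function.update π j q k ((Equiv.funSplitAt j α).symm (a, u) k) = π k (u k) := by
    simp [k.2]
  rw [Fintype.prod_eq_mul_prod_subtype_ne _ j, Fintype.prod_congr _ _ hrest]
  simp only [Equiv.funSplitAt_symm_apply, dite_true, Function.update_self]
  ring

lemma abs_expectProd_update_sub_le {π : ι → α → ℝ} (hπ₀ : ∀ k a, 0 ≤ π k a)
    (hπ₁ : ∀ k, ∑ a, π k a = 1) {j : ι} {G : (ι → α) → ℝ} {δ : ℝ}
    (hG : ∀ v a, |G (Function.update v j a) - G v| ≤ δ) {p p' : α → ℝ}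
    (hpp' : ∑ a, p a = ∑ a, p' a) :
    |expectProd (Function.update π j p) G - expectProd (Function.update π j p') G|
      ≤ δ * ∑ a, |p a - p' a| := by
  set glue : α → ({k // k ≠ j} → α) → ι → α := fun a u => (Equiv.funSplitAt j α).symm (a, u)
  have hinner (u : {k // k ≠ j} → α) :
      |∑ a, p a * G (glue a u) - ∑ a, p' a * G (glue a u)| ≤ δ * ∑ a, |p a - p' a| := by
    simp only [← sum_sub_distrib, ← sub_mul]
    refine abs_sum_mul_le_of_sum_eq_zero (by rw [sum_sub_distrib, hpp', sub_self]) fun a b => ?_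
    rw [show glue a u = Function.update (glue b u) j a from funSplitAt_symm_eq_update j a b u]
    exact hG _ _
  have hweights : ∑ u : {k // k ≠ j} → α, ∏ k, π k.1 (u k) = 1 := by
    rw [← Fintype.prod_sum]
    exact Fintype.prod_eq_one _ fun k => hπ₁ k
  rw [expectProd_update, expectProd_update, ← sum_sub_distrib]
  calc |∑ u, ((∏ k, π k.1 (u k)) * ∑ a, p a * G (glue a u)
          - (∏ k, π k.1 (u k)) * ∑ a, p' a * G (glue a u))|
      ≤ ∑ u, (∏ k, π k.1 (u k)) * |∑ a, p a * G (glue a u) - ∑ a, p' a * G (glue a u)| := by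
        refine (abs_sum_le_sum_abs _ _).trans_eq (sum_congr rfl fun u _ => ?_)
        rw [← mul_sub, abs_mul, abs_of_nonneg (prod_nonneg fun k _ => hπ₀ _ _)]
    _ ≤ ∑ u : {k // k ≠ j} → α, (∏ k, π k.1 (u k)) * (δ * ∑ a, |p a - p' a|) :=
        sum_le_sum fun u _ => mul_le_mul_of_nonneg_left (hinner u) (prod_nonneg fun k _ => hπ₀ _ _)
    _ = δ * ∑ a, |p a - p' a| := by rw [← sum_mul, hweights, one_mul]

end ProductExpectation

lemma sum_abs_apply_le_sqrt_card_mul_norm {ι : Type*} [Fintype ι] (x : EuclideanSpace ℝ ι) :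
    ∑ a, |x a| ≤ √(Fintype.card ι) * ‖x‖ := by
  simpa [EuclideanSpace.norm_eq] using
    Real.sum_mul_le_sqrt_mul_sqrt univ (fun _ => (1 : ℝ)) (fun a => |x a|)

lemma abs_ciSup_sub_ciSup_le {α : Type*} [Nonempty α] {f g : α → ℝ} {c : ℝ}
    (hf : BddAbove (Set.range f)) (hg : BddAbove (Set.range g)) (h : ∀ a, |f a - g a| ≤ c) :
    |(⨆ a, f a) - ⨆ a, g a| ≤ c := by
  rw [abs_sub_le_iff]
  constructor
  · refine sub_le_iff_le_add.2 (ciSup_le fun a => ?_)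
    exact (sub_le_iff_le_add.1 (abs_sub_le_iff.1 (h a)).1).trans (by gcongr; exact le_ciSup hg a)
  · refine sub_le_iff_le_add.2 (ciSup_le fun a => ?_)
    exact (sub_le_iff_le_add.1 (abs_sub_le_iff.1 (h a)).2).trans (by gcongr; exact le_ciSup hf a)

section MeanFieldGame

variable {K N : ℕ} {F : EuclideanSpace ℝ (Fin K) → EuclideanSpace ℝ (Fin K)}
  {π : Fin N → EuclideanSpace ℝ (Fin K)}

lemma update_mem_simplex (hπ : ∀ k, π k ∈ simplex K) {p : EuclideanSpace ℝ (Fin K)}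
    (hp : p ∈ simplex K) (j k : Fin N) : Function.update π j p k ∈ simplex K := by
  rcases eq_or_ne k j with rfl | hk
  · simpa using hp
  · simpa [hk] using hπ k

lemma empDist_mem_simplex (hN : 0 < N) (v : Fin N → Fin K) : empDist K N v ∈ simplex K := by
  have happly (a : Fin K) : empDist K N v a = (N : ℝ)⁻¹ * ∑ k, if a = v k then 1 else 0 := by
    simp [empDist, Pi.single_apply]
  refine ⟨fun a => ?_, ?_⟩
  · rw [happly]; positivity
  · simp only [happly, ← mul_sum]
    rw [sum_comm]
    simp [hN.ne']

lemma norm_empDist_update_sub_le (v : Fin N → Fin K) (j : Fin N) (b : Fin K) :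
    ‖empDist K N (Function.update v j b) - empDist K N v‖ ≤ 2 / N := by
  have hdiff : empDist K N (Function.update v j b) - empDist K N v
      = (N : ℝ)⁻¹ • (EuclideanSpace.single b 1 - EuclideanSpace.single (v j) 1) := by
    simp only [empDist, ← smul_sub, ← sum_sub_distrib]
    rw [sum_eq_single j (fun k _ hk => by simp [hk]) (by simp)]
    simp
  calc ‖empDist K N (Function.update v j b) - empDist K N v‖
      ≤ (N : ℝ)⁻¹ *
          (‖EuclideanSpace.single b (1 : ℝ)‖ + ‖EuclideanSpace.single (v j) (1 : ℝ)‖) := by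
        rw [hdiff, norm_smul, Real.norm_of_nonneg (by positivity)]
        gcongr
        exact norm_sub_le _ _
    _ = 2 / N := by simp; ring

lemma Vval_eq_expectProd (π : Fin N → EuclideanSpace ℝ (Fin K)) (i : Fin N) :
    Vval K N F π i = expectProd (fun k => ⇑(π k)) (fun v => F (empDist K N v) (v i)) := rfl

lemma abs_Vval_update_sub_le (hπ : ∀ k, π k ∈ simplex K) {i j : Fin N} {δ : ℝ}
    (hosc : ∀ (v : Fin N → Fin K) (a : Fin K),
      |F (empDist K N (Function.update v j a)) (Function.update v j a i)
        - F (empDist K N v) (v i)| ≤ δ)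
    {p p' : EuclideanSpace ℝ (Fin K)} (hp : p ∈ simplex K) (hp' : p' ∈ simplex K) :
    |Vval K N F (Function.update π j p) i - Vval K N F (Function.update π j p') i|
      ≤ δ * ∑ a, |p a - p' a| := by
  have hcoe (q : EuclideanSpace ℝ (Fin K)) :
      (fun k => ⇑(Function.update π j q k)) = Function.update (fun k => ⇑(π k)) j ⇑q := by
    funext k
    rcases eq_or_ne k j with rfl | hk <;> simp [*]
  rw [Vval_eq_expectProd, Vval_eq_expectProd, hcoe, hcoe]
  exact abs_expectProd_update_sub_le (fun k => (hπ k).1) (fun k => (hπ k).2) hosc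
    (hp.2.trans hp'.2.symm)

lemma abs_Vval_update_self_sub_le
    (hFmap : ∀ μ ∈ simplex K, ∀ a : Fin K, F μ a ∈ Set.Icc (0 : ℝ) 1)
    (hπ : ∀ k, π k ∈ simplex K) (i : Fin N) {p p' : EuclideanSpace ℝ (Fin K)}
    (hp : p ∈ simplex K) (hp' : p' ∈ simplex K) :
    |Vval K N F (Function.update π i p) i - Vval K N F (Function.update π i p') i|
      ≤ ∑ a, |p a - p' a| := by
  refine (abs_Vval_update_sub_le hπ (fun v a => ?_) hp hp').trans_eq (one_mul _)
  have h₁ := hFmap _ (empDist_mem_simplex i.pos (Function.update v i a)) (Function.update v i a i)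
  have h₂ := hFmap _ (empDist_mem_simplex i.pos v) (v i)
  exact abs_sub_le_of_nonneg_of_le h₁.1 h₁.2 h₂.1 h₂.2

lemma abs_Vval_update_sub_le_of_ne {L : ℝ} (hL : 0 ≤ L)
    (hFlip : ∀ μ ∈ simplex K, ∀ μ' ∈ simplex K, ‖F μ - F μ'‖ ≤ L * ‖μ - μ'‖)
    (hπ : ∀ k, π k ∈ simplex K) {i j : Fin N} (hji : j ≠ i) {p p' : EuclideanSpace ℝ (Fin K)}
    (hp : p ∈ simplex K) (hp' : p' ∈ simplex K) :
    |Vval K N F (Function.update π j p) i - Vval K N F (Function.update π j p') i|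
      ≤ 2 * L / N * ∑ a, |p a - p' a| := by
  refine abs_Vval_update_sub_le hπ (fun v a => ?_) hp hp'
  rw [Function.update_of_ne hji.symm]
  calc |F (empDist K N (Function.update v j a)) (v i) - F (empDist K N v) (v i)|
      ≤ ‖F (empDist K N (Function.update v j a)) - F (empDist K N v)‖ :=
        PiLp.norm_apply_le (F (empDist K N (Function.update v j a)) - F (empDist K N v)) (v i)
    _ ≤ L * ‖empDist K N (Function.update v j a) - empDist K N v‖ :=
        hFlip _ (empDist_mem_simplex i.pos _) _ (empDist_mem_simplex i.pos _)
    _ ≤ L * (2 / N) := by gcongr; exact norm_empDist_update_sub_le v j a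
    _ = 2 * L / N := by ring

lemma Vval_le_one (hFmap : ∀ μ ∈ simplex K, ∀ a : Fin K, F μ a ∈ Set.Icc (0 : ℝ) 1)
    (hπ : ∀ k, π k ∈ simplex K) (i : Fin N) : Vval K N F π i ≤ 1 :=
  calc Vval K N F π i ≤ ∑ v : Fin N → Fin K, ∏ k, π k (v k) :=
        sum_le_sum fun v _ => mul_le_of_le_one_right (prod_nonneg fun k _ => (hπ k).1 _)
          (hFmap _ (empDist_mem_simplex i.pos v) _).2
    _ = 1 := by
        rw [← Fintype.prod_sum]
        exact prod_eq_one fun k _ => (hπ k).2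

lemma expl_update_self_sub_expl_update_self (π : Fin N → EuclideanSpace ℝ (Fin K)) (i : Fin N)
    (p p' : EuclideanSpace ℝ (Fin K)) :
    expl K N F (Function.update π i p) i - expl K N F (Function.update π i p') i
      = Vval K N F (Function.update π i p') i - Vval K N F (Function.update π i p) i := by
  simp only [expl, Function.update_idem]
  ring

lemma abs_expl_update_sub_le_of_ne {L : ℝ} (hL : 0 ≤ L)
    (hFmap : ∀ μ ∈ simplex K, ∀ a : Fin K, F μ a ∈ Set.Icc (0 : ℝ) 1)
    (hFlip : ∀ μ ∈ simplex K, ∀ μ' ∈ simplex K, ‖F μ - F μ'‖ ≤ L * ‖μ - μ'‖)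
    (hπ : ∀ k, π k ∈ simplex K) {i j : Fin N} (hji : j ≠ i) {p p' : EuclideanSpace ℝ (Fin K)}
    (hp : p ∈ simplex K) (hp' : p' ∈ simplex K) :
    |expl K N F (Function.update π j p) i - expl K N F (Function.update π j p') i|
      ≤ 4 * L / N * ∑ a, |p a - p' a| := by
  have : Nonempty (simplex K) := ⟨⟨p, hp⟩⟩
  have hbdd {r : EuclideanSpace ℝ (Fin K)} (hr : r ∈ simplex K) :
      BddAbove (Set.range fun q : simplex K =>
        Vval K N F (Function.update (Function.update π j r) i q) i) := by
    refine ⟨1, ?_⟩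
    rintro _ ⟨q, rfl⟩
    exact Vval_le_one hFmap (update_mem_simplex (update_mem_simplex hπ hr j) q.2 i) i
  have hsup := abs_ciSup_sub_ciSup_le (hbdd hp) (hbdd hp') fun q => by
    simp only [Function.update_comm hji]
    exact abs_Vval_update_sub_le_of_ne hL hFlip (update_mem_simplex hπ q.2 i) hji hp hp'
  have hV := abs_Vval_update_sub_le_of_ne hL hFlip hπ hji hp hp'
  rw [expl, expl, sub_sub_sub_comm]
  calc _ ≤ _ := abs_sub _ _
    _ ≤ 2 * L / N * ∑ a, |p a - p' a| + 2 * L / N * ∑ a, |p a - p' a| := add_le_add hsup hV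
    _ = 4 * L / N * ∑ a, |p a - p' a| := by ring

end MeanFieldGame

theorem stmt2_general (K N : ℕ) (L : ℝ) (hL : 0 ≤ L)
    (F : EuclideanSpace ℝ (Fin K) → EuclideanSpace ℝ (Fin K))
    (hFmap : ∀ μ ∈ simplex K, ∀ a : Fin K, F μ a ∈ Set.Icc (0 : ℝ) 1)
    (hFlip : ∀ μ ∈ simplex K, ∀ μ' ∈ simplex K, ‖F μ - F μ'‖ ≤ L * ‖μ - μ'‖)
    (π : Fin N → EuclideanSpace ℝ (Fin K)) (hπ : ∀ k, π k ∈ simplex K)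
    (i j : Fin N) (p p' : EuclideanSpace ℝ (Fin K))
    (hp : p ∈ simplex K) (hp' : p' ∈ simplex K) :
    |expl K N F (Function.update π j p) i - expl K N F (Function.update π j p') i|
      ≤ (if j = i then Real.sqrt K else 4 * L * Real.sqrt (2 * K) / N) * ‖p - p'‖ := by
  have hl1 : ∑ a, |p a - p' a| ≤ √K * ‖p - p'‖ := by
    simpa using sum_abs_apply_le_sqrt_card_mul_norm (p - p')
  split_ifs with hji
  · subst hji
    rw [expl_update_self_sub_expl_update_self, abs_sub_comm]
    exact (abs_Vval_update_self_sub_le hFmap hπ j hp hp').trans hl1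
  · calc |expl K N F (Function.update π j p) i - expl K N F (Function.update π j p') i|
        ≤ 4 * L / N * ∑ a, |p a - p' a| :=
          abs_expl_update_sub_le_of_ne hL hFmap hFlip hπ hji hp hp'
      _ ≤ 4 * L / N * (√K * ‖p - p'‖) := by gcongr
      _ ≤ 4 * L / N * (√(2 * K) * ‖p - p'‖) := by gcongr; linarith
      _ = 4 * L * √(2 * K) / N * ‖p - p'‖ := by ring

/-- Lipschitz continuity of the exploitability, Lemma 2 of the paper.
For `L`-Lipschitz `F : Δ_A → [0,1]^K`, players `i, j`, a strategy profile `(π¹,…,π^N)` and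
`π, π̄ ∈ Δ_A`: `|E^i_exp(π, π^{−j}) − E^i_exp(π̄, π^{−j})| ≤ L̄_{j,i} ‖π − π̄‖₂` with
`L̄_{j,i} = √K` if `j = i` and `L̄_{j,i} = 4L√(2K)/N` otherwise. -/
theorem stmt2 (K N : ℕ) (hK : 0 < K) (hN : 0 < N) (L : ℝ) (hL : 0 ≤ L)
    (F : EuclideanSpace ℝ (Fin K) → EuclideanSpace ℝ (Fin K))
    (hFmap : ∀ μ ∈ simplex K, ∀ a : Fin K, F μ a ∈ Set.Icc (0 : ℝ) 1)
    (hFlip : ∀ μ ∈ simplex K, ∀ μ' ∈ simplex K, ‖F μ - F μ'‖ ≤ L * ‖μ - μ'‖)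
    (π : Fin N → EuclideanSpace ℝ (Fin K)) (hπ : ∀ k, π k ∈ simplex K)
    (i j : Fin N) (p p' : EuclideanSpace ℝ (Fin K))
    (hp : p ∈ simplex K) (hp' : p' ∈ simplex K) :
    |expl K N F (Function.update π j p) i - expl K N F (Function.update π j p') i|
      ≤ (if j = i then Real.sqrt K else 4 * L * Real.sqrt (2 * K) / N) * ‖p - p'‖ :=
  stmt2_general K N L hL F hFmap hFlip π hπ i j p p' hp hp'
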